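/- Let 1 < p₁, p₂ < ∞ and 0 < q < ∞ with 1/q > 1/p₁ + 1/p₂, and let λ = n₁/p₁' + n₂/p₂' + m/q with n₁, n₂ ≥ m. Define f_i(y_i) = χ_{\{|y_i| ≤ 1/2\}}(y_i) |y_i|^{−n_i/p_i} (log(1/|y_i|))^{−(1+ε)/p_i} on ℝ^{n_i}, where ε > 0 satisfies (1+ε)(1/p₁ + 1/p₂) q < 1. Then f_i ∈ L^{p_i}, and writing y_i = (y_{i1}, y_{i2}) ∈ ℝ^m × ℝ^{n_i−m}, the function F(x) = ∫ f₁(y₁)f₂(y₂)(|x−y_{11}|+|x−y_{21}|+|y_{12}|+|y_{22}|)^{−λ} dy₁dy₂ satisfies F(x) ≳ |x|^{−m/q}(log(1/|x|))^{−(1+ε)(1/p₁+1/p₂)} for |x| small, hence F ∉ L^q(ℝ^m). -/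

import Mathlib

open MeasureTheory ENNReal

abbrev E (n : ℕ) : Type := EuclideanSpace ℝ (Fin n)

/-!
For `‖x‖ = r ≤ 1/4`, restrict both integrations to the shells `r/4 ≤ |yᵢ| ≤ r/2` (with `|yᵢ|` the
Euclidean norm on `ℝ^m × ℝ^(nᵢ-m)`). There `fᵢ ≳ r^(-nᵢ/pᵢ) (log 1/r)^(-(1+ε)/pᵢ)`, the kernel is
`≳ r^(-λ)`, and the shells have volume `≍ r^nᵢ`; by the choice of `λ` the product of these bounds
is `r^(-m/q) (log 1/r)^(-(1+ε)(1/p₁+1/p₂))`. Both `fᵢ ∈ Lᵖⁱ` and `F ∉ L^q` then reduce, in polar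
coordinates, to the fact that `∫₀^δ r⁻¹ (log 1/r)^(-s) dr` is finite iff `s > 1`, which the
substitution `r = e^(-u)` turns into the integrability of `u^(-s)` at infinity.
-/

open Set Metric Module
open scoped Pointwise

noncomputable def logProfile (a b t : ℝ) : ℝ :=
  if t ≤ 1 / 2 then t ^ (-a) * Real.log (1 / t) ^ (-b) else 0

theorem log_one_div_nonneg {t : ℝ} (h0 : 0 ≤ t) (h1 : t ≤ 1) : 0 ≤ Real.log (1 / t) := by
  rw [one_div, Real.log_inv, neg_nonneg]
  exact Real.log_nonpos h0 h1

theorem integrableOn_inv_mul_log_rpow_iff {δ s : ℝ} (hδ0 : 0 < δ) (hδ1 : δ < 1) :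
    IntegrableOn (fun r ↦ r⁻¹ * Real.log (1 / r) ^ (-s)) (Ioo 0 δ) ↔ 1 < s := by
  have himage : (fun u ↦ Real.exp (-u)) '' Ioi (-Real.log δ) = Ioo 0 δ := by
    rw [← image_image Real.exp Neg.neg, image_neg_Ioi, neg_neg, Real.image_exp_Iio,
      Real.exp_log hδ0]
  have hderiv : ∀ u ∈ Ioi (-Real.log δ),
      HasDerivWithinAt (fun u ↦ Real.exp (-u)) (-Real.exp (-u)) (Ioi (-Real.log δ)) u :=
    fun u _ ↦ by simpa using ((hasDerivAt_neg u).exp).hasDerivWithinAt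
  have hinj : InjOn (fun u ↦ Real.exp (-u)) (Ioi (-Real.log δ)) :=
    fun u _ v _ h ↦ neg_injective (Real.exp_injective h)
  rw [← himage, integrableOn_image_iff_integrableOn_abs_deriv_smul measurableSet_Ioi hderiv hinj,
    ← neg_lt_neg_iff, ← integrableOn_Ioi_rpow_iff (neg_pos.2 (Real.log_neg hδ0 hδ1))]
  refine integrableOn_congr_fun (fun u _ ↦ ?_) measurableSet_Ioi
  simp [abs_of_pos (Real.exp_pos _), ← Real.exp_neg, ← mul_assoc, ← Real.exp_add]

section Radial

variable {X : Type*} [NormedAddCommGroup X] [NormedSpace ℝ X] [FiniteDimensional ℝ X]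
  [MeasurableSpace X] [BorelSpace X] [Nontrivial X] (μ : Measure X) [μ.IsAddHaarMeasure]

theorem integrableOn_norm_rpow_mul_log_rpow_iff {δ s : ℝ} (hδ0 : 0 < δ) (hδ1 : δ < 1) :
    IntegrableOn (fun x : X ↦ ‖x‖ ^ (-(finrank ℝ X : ℝ)) * Real.log (1 / ‖x‖) ^ (-s))
      (ball 0 δ) μ ↔ 1 < s := by
  rw [integrableOn_fun_norm_addHaar μ
      (f := fun r ↦ r ^ (-(finrank ℝ X : ℝ)) * Real.log (1 / r) ^ (-s)),
    ← integrableOn_inv_mul_log_rpow_iff hδ0 hδ1]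
  refine integrableOn_congr_fun (fun r (hr : 0 < r ∧ r < δ) ↦ ?_) measurableSet_Ioo
  rw [smul_eq_mul, ← mul_assoc, ← Real.rpow_natCast, ← Real.rpow_add hr.1,
    Nat.cast_sub finrank_pos, Nat.cast_one,
    show (finrank ℝ X : ℝ) - 1 + -(finrank ℝ X : ℝ) = -1 by ring, Real.rpow_neg_one]

theorem memLp_logProfile_norm {p s : ℝ} (hp : 0 < p) (hs : 1 < s) :
    MemLp (fun x : X ↦ logProfile (finrank ℝ X / p) (s / p) ‖x‖) (ENNReal.ofReal p) μ := by
  have hind : (fun x : X ↦ logProfile (finrank ℝ X / p) (s / p) ‖x‖) =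
      (closedBall (0 : X) (1 / 2)).indicator
        fun x ↦ ‖x‖ ^ (-(finrank ℝ X / p)) * Real.log (1 / ‖x‖) ^ (-(s / p)) := by
    ext x
    simp [logProfile, indicator]
  rw [hind, memLp_indicator_iff_restrict measurableSet_closedBall,
    ← integrable_norm_rpow_iff (by fun_prop) (by simpa using hp) ENNReal.ofReal_ne_top,
    ENNReal.toReal_ofReal hp.le]
  refine ((integrableOn_norm_rpow_mul_log_rpow_iff μ (δ := 3 / 4) (by norm_num) (by norm_num)).2
    hs).mono_set (closedBall_subset_ball (by norm_num)) |>.congr_fun (fun x hx ↦ ?_)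
    measurableSet_closedBall
  have hlog : 0 ≤ Real.log (1 / ‖x‖) :=
    log_one_div_nonneg (norm_nonneg x) ((mem_closedBall_zero_iff.1 hx).trans (by norm_num))
  rw [Real.norm_of_nonneg (by positivity), Real.mul_rpow (by positivity) (by positivity),
    ← Real.rpow_mul (norm_nonneg x), ← Real.rpow_mul hlog]
  field_simp

theorem lintegral_eq_top_of_le {G : X → ℝ≥0∞} {c δ θ : ℝ} (hc : 0 < c) (hδ0 : 0 < δ)
    (hδ1 : δ < 1) (hθ : θ ≤ 1)
    (hG : ∀ x, 0 < ‖x‖ → ‖x‖ ≤ δ →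
      ENNReal.ofReal (c * (‖x‖ ^ (-(finrank ℝ X : ℝ)) * Real.log (1 / ‖x‖) ^ (-θ))) ≤ G x) :
    ∫⁻ x, G x ∂μ = ⊤ := by
  set g : X → ℝ := fun x ↦ ‖x‖ ^ (-(finrank ℝ X : ℝ)) * Real.log (1 / ‖x‖) ^ (-θ)
  have hg_nonneg : ∀ x ∈ ball (0 : X) δ, 0 ≤ g x := fun x hx ↦ by
    have := log_one_div_nonneg (norm_nonneg x) ((mem_ball_zero_iff.1 hx).le.trans hδ1.le)
    positivity
  have hg_le : ∀ x, ENNReal.ofReal ((ball 0 δ).indicator (fun x ↦ c * g x) x) ≤ G x := by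
    intro x
    by_cases hx : x ∈ ball (0 : X) δ
    · rcases eq_or_ne x 0 with rfl | hx0
      · rw [indicator_of_mem hx]
        simp only [g, norm_zero, Real.zero_rpow (neg_ne_zero.2 (Nat.cast_ne_zero.2 finrank_pos.ne')),
          zero_mul, mul_zero, ENNReal.ofReal_zero, zero_le]
      · rw [indicator_of_mem hx]
        exact hG x (norm_pos_iff.2 hx0) (mem_ball_zero_iff.1 hx).le
    · simp [indicator_of_notMem hx]
  by_contra hfin
  have hint : Integrable ((ball 0 δ).indicator (fun x ↦ c * g x)) μ := by
    refine ⟨((by fun_prop : Measurable fun x ↦ c * g x).indicator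
      measurableSet_ball).aestronglyMeasurable, ?_⟩
    rw [hasFiniteIntegral_iff_ofReal (.of_forall fun x ↦ ?_)]
    · exact (lintegral_mono hg_le).trans_lt (lt_top_iff_ne_top.2 hfin)
    · by_cases hx : x ∈ ball (0 : X) δ
      · simpa [indicator_of_mem hx] using mul_nonneg hc.le (hg_nonneg x hx)
      · simp [indicator_of_notMem hx]
  rw [integrable_indicator_iff measurableSet_ball] at hint
  have := (integrableOn_norm_rpow_mul_log_rpow_iff μ hδ0 hδ1).1
    ((integrable_const_mul_iff (isUnit_iff_ne_zero.2 hc.ne') g).1 hint)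
  linarith

theorem lintegral_rpow_eq_top_of_le {G : X → ℝ≥0∞} {c δ q b : ℝ} (hc : 0 < c) (hδ0 : 0 < δ)
    (hδ1 : δ < 1) (hq : 0 < q) (hbq : b * q ≤ 1)
    (hG : ∀ x, 0 < ‖x‖ → ‖x‖ ≤ δ →
      ENNReal.ofReal (c * ‖x‖ ^ (-(finrank ℝ X : ℝ) / q) * Real.log (1 / ‖x‖) ^ (-b)) ≤ G x) :
    ∫⁻ x, G x ^ q ∂μ = ⊤ := by
  refine lintegral_eq_top_of_le μ (c := c ^ q) (by positivity) hδ0 hδ1 hbq fun x hx hxδ ↦ ?_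
  have hlog := log_one_div_nonneg (norm_nonneg x) (hxδ.trans hδ1.le)
  calc ENNReal.ofReal (c ^ q * (‖x‖ ^ (-(finrank ℝ X : ℝ)) * Real.log (1 / ‖x‖) ^ (-(b * q))))
      = ENNReal.ofReal (c * ‖x‖ ^ (-(finrank ℝ X : ℝ) / q) * Real.log (1 / ‖x‖) ^ (-b)) ^ q := by
        rw [ENNReal.ofReal_rpow_of_nonneg (by positivity) hq.le, Real.mul_rpow (by positivity)
          (by positivity), Real.mul_rpow hc.le (by positivity), ← Real.rpow_mul (norm_nonneg x),
          ← Real.rpow_mul hlog, div_mul_cancel₀ _ hq.ne', neg_mul, mul_assoc]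
    _ ≤ G x ^ q := ENNReal.rpow_le_rpow (hG x hx hxδ) hq.le

theorem exists_measure_closedBall_diff_ball_eq :
    ∃ C : ℝ, 0 < C ∧ ∀ r : ℝ, 0 < r →
      μ (closedBall (0 : X) (r / 2) \ ball 0 (r / 4)) = ENNReal.ofReal (C * r ^ finrank ℝ X) := by
  set A := closedBall (0 : X) (1 / 2) \ ball 0 (1 / 4)
  obtain ⟨v, hv⟩ := exists_norm_eq X (c := 3 / 8) (by norm_num)
  have hA_pos : 0 < μ A := by
    refine (measure_ball_pos μ v (by norm_num : (0 : ℝ) < 1 / 8)).trans_le (measure_mono ?_)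
    intro y hy
    have := abs_le.1 (abs_norm_sub_norm_le y v)
    rw [mem_ball, dist_eq_norm] at hy
    simp only [A, mem_sdiff, mem_closedBall_zero_iff, mem_ball_zero_iff, not_lt]
    constructor <;> linarith [this.1, this.2]
  have hA_fin : μ A ≠ ⊤ := (measure_mono sdiff_subset).trans_lt measure_closedBall_lt_top |>.ne
  refine ⟨μ.real A, ENNReal.toReal_pos hA_pos.ne' hA_fin, fun r hr ↦ ?_⟩
  have hscale : r • A = closedBall (0 : X) (r / 2) \ ball 0 (r / 4) := by
    rw [smul_set_sdiff₀ hr.ne', _root_.smul_closedBall _ _ (by norm_num), _root_.smul_ball hr.ne',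
      smul_zero, Real.norm_of_nonneg hr.le]
    ring_nf
  rw [← hscale, Measure.addHaar_smul_of_nonneg μ hr.le, Measure.real,
    ENNReal.ofReal_mul (by positivity), ENNReal.ofReal_toReal hA_fin, mul_comm]

end Radial

theorem rpow_mul_log_rpow_le_logProfile {a b r t : ℝ} (ha : 0 ≤ a) (hb : 0 ≤ b) (hr0 : 0 < r)
    (hr : r ≤ 1 / 4) (ht₁ : r / 4 ≤ t) (ht₂ : t ≤ r / 2) :
    (r / 2) ^ (-a) * (2 * Real.log (1 / r)) ^ (-b) ≤ logProfile a b t := by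
  have ht0 : 0 < t := by linarith
  have hlog_pos : 0 < Real.log (1 / t) := Real.log_pos (by rw [lt_div_iff₀ ht0]; linarith)
  have hlog_le : Real.log (1 / t) ≤ 2 * Real.log (1 / r) := by
    rw [← Real.log_rpow (by positivity), Real.rpow_two]
    exact Real.log_le_log (by positivity) (by
      rw [div_pow, one_pow, div_le_div_iff₀ ht0 (by positivity)]; nlinarith)
  rw [logProfile, if_pos (by linarith)]
  exact mul_le_mul (Real.rpow_le_rpow_of_nonpos ht0 ht₂ (neg_nonpos.2 ha))
    (Real.rpow_le_rpow_of_nonpos hlog_pos hlog_le (neg_nonpos.2 hb))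
    (Real.rpow_nonneg (by linarith) _) (Real.rpow_nonneg ht0.le _)

theorem rpow_neg_le_rpow_neg_of_norm_le {U : Type*} [SeminormedAddCommGroup U] {x z₁ z₂ : U}
    {t₁ t₂ lam : ℝ} (hlam : 0 ≤ lam) (hx : 0 < ‖x‖) (hz₁ : ‖z₁‖ ≤ ‖x‖ / 2)
    (hz₂ : ‖z₂‖ ≤ ‖x‖ / 2) (ht₁ : 0 ≤ t₁) (ht₁' : t₁ ≤ ‖x‖ / 2) (ht₂ : 0 ≤ t₂)
    (ht₂' : t₂ ≤ ‖x‖ / 2) :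
    (4 * ‖x‖) ^ (-lam) ≤ (‖x - z₁‖ + ‖x - z₂‖ + t₁ + t₂) ^ (-lam) := by
  have h₁ := norm_sub_norm_le x z₁
  have h₁' := norm_sub_le x z₁
  have h₂ := norm_sub_le x z₂
  have h₂' := norm_nonneg (x - z₂)
  exact Real.rpow_le_rpow_of_nonpos (by linarith) (by linarith) (neg_nonpos.2 hlam)

theorem le_lintegral_lintegral_of_forall_le {α β : Type*} [MeasurableSpace α] [MeasurableSpace β]
    {μ : Measure α} {ν : Measure β} {S : Set α} {T : Set β} (hS : MeasurableSet S)
    (hT : MeasurableSet T) {a : ℝ≥0∞} {g : α → β → ℝ≥0∞} (h : ∀ y₁ ∈ S, ∀ y₂ ∈ T, a ≤ g y₁ y₂) :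
    a * ν T * μ S ≤ ∫⁻ y₁, ∫⁻ y₂, g y₁ y₂ ∂ν ∂μ :=
  calc a * ν T * μ S = ∫⁻ _ in S, ∫⁻ _ in T, a ∂ν ∂μ := by simp
    _ ≤ ∫⁻ y₁ in S, ∫⁻ y₂ in T, g y₁ y₂ ∂ν ∂μ :=
      setLIntegral_mono' hS fun y₁ hy₁ ↦ setLIntegral_mono' hT fun y₂ hy₂ ↦ h y₁ hy₁ y₂ hy₂
    _ ≤ ∫⁻ y₁, ∫⁻ y₂, g y₁ y₂ ∂ν ∂μ :=
      (setLIntegral_le_lintegral _ _).trans (lintegral_mono fun _ ↦ setLIntegral_le_lintegral _ _)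

theorem finrank_withLp_prod {U V : Type*} [NormedAddCommGroup U] [NormedSpace ℝ U]
    [FiniteDimensional ℝ U] [NormedAddCommGroup V] [NormedSpace ℝ V] [FiniteDimensional ℝ V] :
    finrank ℝ (WithLp 2 (U × V)) = finrank ℝ U + finrank ℝ V := by
  rw [(WithLp.linearEquiv 2 ℝ (U × V)).finrank_eq, finrank_prod]

theorem logProfile_norm_toLp {U V : Type*} [SeminormedAddCommGroup U] [SeminormedAddCommGroup V]
    (a b : ℝ) (y : U × V) :
    logProfile a b ‖WithLp.toLp 2 y‖ = if √(‖y.1‖ ^ 2 + ‖y.2‖ ^ 2) ≤ 1 / 2 then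
      √(‖y.1‖ ^ 2 + ‖y.2‖ ^ 2) ^ (-a) * Real.log (1 / √(‖y.1‖ ^ 2 + ‖y.2‖ ^ 2)) ^ (-b)
      else 0 := by
  rw [WithLp.prod_norm_eq_of_L2]
  rfl

section Product

variable {U V₁ V₂ : Type*} [NormedAddCommGroup U] [InnerProductSpace ℝ U] [FiniteDimensional ℝ U]
  [MeasurableSpace U] [BorelSpace U]
  [NormedAddCommGroup V₁] [InnerProductSpace ℝ V₁] [FiniteDimensional ℝ V₁]
  [MeasurableSpace V₁] [BorelSpace V₁]
  [NormedAddCommGroup V₂] [InnerProductSpace ℝ V₂] [FiniteDimensional ℝ V₂]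
  [MeasurableSpace V₂] [BorelSpace V₂]

theorem memLp_logProfile_norm_toLp {p s : ℝ} (hp : 0 < p) (hs : 1 < s)
    (hdim : 0 < finrank ℝ U + finrank ℝ V₁) :
    MemLp (fun y : U × V₁ ↦
      logProfile ((finrank ℝ U + finrank ℝ V₁ : ℕ) / p) (s / p) ‖WithLp.toLp 2 y‖)
      (ENNReal.ofReal p) volume := by
  have : Nontrivial (WithLp 2 (U × V₁)) :=
    nontrivial_of_finrank_pos (R := ℝ) (finrank_withLp_prod (U := U) (V := V₁) ▸ hdim)
  have h := memLp_logProfile_norm (volume : Measure (WithLp 2 (U × V₁))) hp hs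
  rw [finrank_withLp_prod] at h
  exact h.comp_measurePreserving (WithLp.volume_preserving_toLp U V₁)

theorem exists_rpow_mul_log_rpow_le_lintegral_lintegral [Nontrivial U]
    {a₁ b₁ a₂ b₂ lam : ℝ} (ha₁ : 0 ≤ a₁) (hb₁ : 0 ≤ b₁) (ha₂ : 0 ≤ a₂) (hb₂ : 0 ≤ b₂)
    (hlam : 0 ≤ lam) :
    ∃ c : ℝ, 0 < c ∧ ∀ x : U, 0 < ‖x‖ → ‖x‖ ≤ 1 / 4 →
      ENNReal.ofReal (c * ‖x‖ ^ (((finrank ℝ U + finrank ℝ V₁ : ℕ) : ℝ) - a₁ +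
          (((finrank ℝ U + finrank ℝ V₂ : ℕ) : ℝ) - a₂) - lam) *
        Real.log (1 / ‖x‖) ^ (-(b₁ + b₂))) ≤
      ∫⁻ y₁ : U × V₁, ∫⁻ y₂ : U × V₂,
        ENNReal.ofReal (logProfile a₁ b₁ ‖WithLp.toLp 2 y₁‖) *
        ENNReal.ofReal (logProfile a₂ b₂ ‖WithLp.toLp 2 y₂‖) *
        ENNReal.ofReal ((‖x - y₁.1‖ + ‖x - y₂.1‖ + ‖y₁.2‖ + ‖y₂.2‖) ^ (-lam)) := by
  obtain ⟨C₁, hC₁, hvol₁⟩ := exists_measure_closedBall_diff_ball_eq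
    (volume : Measure (WithLp 2 (U × V₁)))
  obtain ⟨C₂, hC₂, hvol₂⟩ := exists_measure_closedBall_diff_ball_eq
    (volume : Measure (WithLp 2 (U × V₂)))
  refine ⟨C₁ * C₂ * 2 ^ a₁ * 2 ^ a₂ * 2 ^ (-b₁) * 2 ^ (-b₂) * 4 ^ (-lam), by positivity,
    fun x hx0 hx1 ↦ ?_⟩
  set r := ‖x‖
  set L := Real.log (1 / r)
  have hL : 0 < L := Real.log_pos (by rw [lt_div_iff₀ hx0]; linarith)
  set S₁ := WithLp.toLp 2 ⁻¹' (closedBall (0 : WithLp 2 (U × V₁)) (r / 2) \ ball 0 (r / 4))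
  set S₂ := WithLp.toLp 2 ⁻¹' (closedBall (0 : WithLp 2 (U × V₂)) (r / 2) \ ball 0 (r / 4))
  have hS₁ : MeasurableSet S₁ := (measurableSet_closedBall.diff measurableSet_ball).preimage
    (WithLp.volume_preserving_toLp U V₁).measurable
  have hS₂ : MeasurableSet S₂ := (measurableSet_closedBall.diff measurableSet_ball).preimage
    (WithLp.volume_preserving_toLp U V₂).measurable
  have hvolS₁ : volume S₁ = ENNReal.ofReal (C₁ * r ^ (finrank ℝ U + finrank ℝ V₁)) := by
    rw [(WithLp.volume_preserving_toLp U V₁).measure_preimage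
      (measurableSet_closedBall.diff measurableSet_ball).nullMeasurableSet, hvol₁ r hx0,
      finrank_withLp_prod]
  have hvolS₂ : volume S₂ = ENNReal.ofReal (C₂ * r ^ (finrank ℝ U + finrank ℝ V₂)) := by
    rw [(WithLp.volume_preserving_toLp U V₂).measure_preimage
      (measurableSet_closedBall.diff measurableSet_ball).nullMeasurableSet, hvol₂ r hx0,
      finrank_withLp_prod]
  have hbound : ∀ y₁ ∈ S₁, ∀ y₂ ∈ S₂,
      ENNReal.ofReal ((r / 2) ^ (-a₁) * (2 * L) ^ (-b₁) * ((r / 2) ^ (-a₂) * (2 * L) ^ (-b₂)) *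
        (4 * r) ^ (-lam)) ≤
      ENNReal.ofReal (logProfile a₁ b₁ ‖WithLp.toLp 2 y₁‖) *
        ENNReal.ofReal (logProfile a₂ b₂ ‖WithLp.toLp 2 y₂‖) *
        ENNReal.ofReal ((‖x - y₁.1‖ + ‖x - y₂.1‖ + ‖y₁.2‖ + ‖y₂.2‖) ^ (-lam)) := by
    intro y₁ hy₁ y₂ hy₂
    simp only [S₁, S₂, mem_preimage, mem_sdiff, mem_closedBall_zero_iff, mem_ball_zero_iff,
      not_lt] at hy₁ hy₂
    rw [ENNReal.ofReal_mul (by positivity), ENNReal.ofReal_mul (by positivity)]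
    refine mul_le_mul' (mul_le_mul' ?_ ?_) ?_ <;> refine ENNReal.ofReal_le_ofReal ?_
    · exact rpow_mul_log_rpow_le_logProfile ha₁ hb₁ hx0 hx1 hy₁.2 hy₁.1
    · exact rpow_mul_log_rpow_le_logProfile ha₂ hb₂ hx0 hx1 hy₂.2 hy₂.1
    · exact rpow_neg_le_rpow_neg_of_norm_le hlam hx0 ((WithLp.norm_fst_le _ _).trans hy₁.1)
        ((WithLp.norm_fst_le _ _).trans hy₂.1) (norm_nonneg _)
        ((WithLp.norm_snd_le _ _).trans hy₁.1) (norm_nonneg _)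
        ((WithLp.norm_snd_le _ _).trans hy₂.1)
  refine le_trans (le_of_eq ?_) (le_lintegral_lintegral_of_forall_le hS₁ hS₂ hbound)
  rw [hvolS₁, hvolS₂, ← ENNReal.ofReal_mul (by positivity), ← ENNReal.ofReal_mul (by positivity)]
  congr 1
  rw [Real.div_rpow hx0.le zero_le_two, Real.div_rpow hx0.le zero_le_two,
    Real.mul_rpow zero_le_two hL.le, Real.mul_rpow zero_le_two hL.le,
    Real.mul_rpow zero_le_four hx0.le, Real.rpow_sub hx0, Real.rpow_add hx0, Real.rpow_sub hx0,
    Real.rpow_sub hx0, Real.rpow_natCast, Real.rpow_natCast, neg_add, Real.rpow_add hL]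
  simp only [Real.rpow_neg zero_le_two, Real.rpow_neg hx0.le, Real.rpow_neg zero_le_four]
  field_simp

end Product

theorem stmt17_general (n₁ n₂ m : ℕ) (hm : 0 < m) (h₁ : m ≤ n₁) (h₂ : m ≤ n₂)
    (p₁ p₂ q ε lam : ℝ) (hp₁ : 1 < p₁) (hp₂ : 1 < p₂) (hq0 : 0 < q)
    (hε : 0 < ε)
    (hεq : (1 + ε) * (1/p₁ + 1/p₂) * q < 1)
    (hhom : lam = n₁ * (1 - 1/p₁) + n₂ * (1 - 1/p₂) + m / q)
    (f₁ : E m × E (n₁ - m) → ℝ) (f₂ : E m × E (n₂ - m) → ℝ)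
    (hf₁ : ∀ y, f₁ y = if Real.sqrt (‖y.1‖^2 + ‖y.2‖^2) ≤ 1/2 then
        Real.sqrt (‖y.1‖^2 + ‖y.2‖^2) ^ (-(n₁ : ℝ)/p₁) *
          Real.log (1 / Real.sqrt (‖y.1‖^2 + ‖y.2‖^2)) ^ (-(1+ε)/p₁) else 0)
    (hf₂ : ∀ y, f₂ y = if Real.sqrt (‖y.1‖^2 + ‖y.2‖^2) ≤ 1/2 then
        Real.sqrt (‖y.1‖^2 + ‖y.2‖^2) ^ (-(n₂ : ℝ)/p₂) *
          Real.log (1 / Real.sqrt (‖y.1‖^2 + ‖y.2‖^2)) ^ (-(1+ε)/p₂) else 0)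
    (F : E m → ℝ≥0∞)
    (hF : ∀ x, F x = ∫⁻ y₁ : E m × E (n₁ - m), ∫⁻ y₂ : E m × E (n₂ - m),
        ENNReal.ofReal (f₁ y₁) * ENNReal.ofReal (f₂ y₂) *
        ENNReal.ofReal
          ((‖x - y₁.1‖ + ‖x - y₂.1‖ + ‖y₁.2‖ + ‖y₂.2‖) ^ (-lam)) ∂volume ∂volume) :
    MemLp f₁ (ENNReal.ofReal p₁) volume ∧ MemLp f₂ (ENNReal.ofReal p₂) volume ∧
    (∃ c : ℝ, 0 < c ∧ ∃ δ : ℝ, 0 < δ ∧ ∀ x : E m, 0 < ‖x‖ → ‖x‖ ≤ δ →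
      ENNReal.ofReal (c * ‖x‖ ^ (-(m : ℝ)/q) *
        Real.log (1/‖x‖) ^ (-(1+ε) * (1/p₁ + 1/p₂))) ≤ F x) ∧
    ∫⁻ x : E m, F x ^ q ∂volume = ⊤ := by
  have hp₁0 : 0 < p₁ := by linarith
  have hp₂0 : 0 < p₂ := by linarith
  have : Nontrivial (E m) := nontrivial_of_finrank_pos (R := ℝ) (by simpa using hm)
  have hdim₁ : finrank ℝ (E m) + finrank ℝ (E (n₁ - m)) = n₁ := by
    rw [finrank_euclideanSpace_fin, finrank_euclideanSpace_fin]; omega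
  have hdim₂ : finrank ℝ (E m) + finrank ℝ (E (n₂ - m)) = n₂ := by
    rw [finrank_euclideanSpace_fin, finrank_euclideanSpace_fin]; omega
  have hf₁' : f₁ = fun y ↦ logProfile (n₁ / p₁) ((1 + ε) / p₁) ‖WithLp.toLp 2 y‖ :=
    funext fun y ↦ by rw [hf₁, logProfile_norm_toLp, neg_div, neg_div]
  have hf₂' : f₂ = fun y ↦ logProfile (n₂ / p₂) ((1 + ε) / p₂) ‖WithLp.toLp 2 y‖ :=
    funext fun y ↦ by rw [hf₂, logProfile_norm_toLp, neg_div, neg_div]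
  have hlam : 0 ≤ lam := by
    have hinv₁ := (div_le_one hp₁0).2 hp₁.le
    have hinv₂ := (div_le_one hp₂0).2 hp₂.le
    rw [hhom]
    exact add_nonneg (add_nonneg (mul_nonneg n₁.cast_nonneg (by linarith))
      (mul_nonneg n₂.cast_nonneg (by linarith))) (by positivity)
  obtain ⟨c, hc, hlow⟩ := exists_rpow_mul_log_rpow_le_lintegral_lintegral
    (U := E m) (V₁ := E (n₁ - m)) (V₂ := E (n₂ - m)) (a₁ := n₁ / p₁) (b₁ := (1 + ε) / p₁)
    (a₂ := n₂ / p₂) (b₂ := (1 + ε) / p₂) (by positivity) (by positivity) (by positivity)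
    (by positivity) hlam
  have hlow' : ∀ x : E m, 0 < ‖x‖ → ‖x‖ ≤ 1 / 4 →
      ENNReal.ofReal (c * ‖x‖ ^ (-(m : ℝ) / q) *
        Real.log (1 / ‖x‖) ^ (-(1 + ε) * (1 / p₁ + 1 / p₂))) ≤ F x := by
    intro x hx0 hx1
    rw [hF, hf₁', hf₂']
    convert hlow x hx0 hx1 using 4
    · rw [hdim₁, hdim₂, hhom]
      congr 1
      ring
    · ring
  refine ⟨?_, ?_, ⟨c, hc, 1 / 4, by norm_num, hlow'⟩, ?_⟩
  · have := memLp_logProfile_norm_toLp (U := E m) (V₁ := E (n₁ - m)) hp₁0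
      (s := 1 + ε) (by linarith) (by omega)
    rwa [hdim₁, ← hf₁'] at this
  · have := memLp_logProfile_norm_toLp (U := E m) (V₁ := E (n₂ - m)) hp₂0
      (s := 1 + ε) (by linarith) (by omega)
    rwa [hdim₂, ← hf₂'] at this
  · refine lintegral_rpow_eq_top_of_le volume hc (δ := 1 / 4) (by norm_num) (by norm_num) hq0
      (b := (1 + ε) * (1 / p₁ + 1 / p₂)) hεq.le fun x hx0 hx1 ↦ ?_
    rw [finrank_euclideanSpace_fin, ← neg_mul]
    exact hlow' x hx0 hx1

/-- The counterexample showing `1/q ≤ 1/p₁ + 1/p₂` is necessary in the full-rank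
case: for `1 < p₁, p₂ < ∞`, `1/q > 1/p₁ + 1/p₂`, `λ = n₁/p₁' + n₂/p₂' + m/q`,
and `ε > 0` with `(1+ε)(1/p₁+1/p₂)q < 1`, the functions
`f_i(y_i) = χ_{|y_i|≤1/2} |y_i|^{−n_i/p_i}(log 1/|y_i|)^{−(1+ε)/p_i}` lie in
`L^{p_i}`, the bilinear integral `F` satisfies
`F(x) ≳ |x|^{−m/q}(log 1/|x|)^{−(1+ε)(1/p₁+1/p₂)}` for small `|x|`, and `F ∉ L^q`. -/
theorem stmt17 (n₁ n₂ m : ℕ) (hm : 0 < m) (h₁ : m ≤ n₁) (h₂ : m ≤ n₂)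
    (p₁ p₂ q ε lam : ℝ) (hp₁ : 1 < p₁) (hp₂ : 1 < p₂) (hq0 : 0 < q)
    (hqsum : 1/p₁ + 1/p₂ < 1/q) (hε : 0 < ε)
    (hεq : (1 + ε) * (1/p₁ + 1/p₂) * q < 1)
    (hhom : lam = n₁ * (1 - 1/p₁) + n₂ * (1 - 1/p₂) + m / q)
    (f₁ : E m × E (n₁ - m) → ℝ) (f₂ : E m × E (n₂ - m) → ℝ)
    (hf₁ : ∀ y, f₁ y = if Real.sqrt (‖y.1‖^2 + ‖y.2‖^2) ≤ 1/2 then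
        Real.sqrt (‖y.1‖^2 + ‖y.2‖^2) ^ (-(n₁ : ℝ)/p₁) *
          Real.log (1 / Real.sqrt (‖y.1‖^2 + ‖y.2‖^2)) ^ (-(1+ε)/p₁) else 0)
    (hf₂ : ∀ y, f₂ y = if Real.sqrt (‖y.1‖^2 + ‖y.2‖^2) ≤ 1/2 then
        Real.sqrt (‖y.1‖^2 + ‖y.2‖^2) ^ (-(n₂ : ℝ)/p₂) *
          Real.log (1 / Real.sqrt (‖y.1‖^2 + ‖y.2‖^2)) ^ (-(1+ε)/p₂) else 0)
    (F : E m → ℝ≥0∞)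
    (hF : ∀ x, F x = ∫⁻ y₁ : E m × E (n₁ - m), ∫⁻ y₂ : E m × E (n₂ - m),
        ENNReal.ofReal (f₁ y₁) * ENNReal.ofReal (f₂ y₂) *
        ENNReal.ofReal
          ((‖x - y₁.1‖ + ‖x - y₂.1‖ + ‖y₁.2‖ + ‖y₂.2‖) ^ (-lam)) ∂volume ∂volume) :
    MemLp f₁ (ENNReal.ofReal p₁) volume ∧ MemLp f₂ (ENNReal.ofReal p₂) volume ∧
    (∃ c : ℝ, 0 < c ∧ ∃ δ : ℝ, 0 < δ ∧ ∀ x : E m, 0 < ‖x‖ → ‖x‖ ≤ δ →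
      ENNReal.ofReal (c * ‖x‖ ^ (-(m : ℝ)/q) *
        Real.log (1/‖x‖) ^ (-(1+ε) * (1/p₁ + 1/p₂))) ≤ F x) ∧
    ∫⁻ x : E m, F x ^ q ∂volume = ⊤ :=
  stmt17_general n₁ n₂ m hm h₁ h₂ p₁ p₂ q ε lam hp₁ hp₂ hq0 hε hεq hhom f₁ f₂ hf₁ hf₂ F hF
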